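/- Under rerandomization with a symmetric acceptance criterion and equal group sizes, the difference-in-means estimator is unbiased for the average treatment effect: E(τ̂ | φ = 1) = τ, where τ̂ = (2/n)Σ W_i y_i(1) − (2/n)Σ(1−W_i)y_i(0) and τ = (1/n)Σ(y_i(1) − y_i(0)). -/

import Mathlib

/-! Complementing an assignment swaps the treated and control groups, so the estimates for `W`
and `1 - W` add up to `2τ`. Since `A` is closed under complement, pairing each `W ∈ A` with its
complement shows that the average of the estimator over `A` is exactly `τ`. -/

open Finset Function

theorem Finset.sum_comp_involutive {α β : Type*} [AddCommMonoid β] {s : Finset α} {σ : α → α}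
    (hσ : Involutive σ) (hs : ∀ a ∈ s, σ a ∈ s) (f : α → β) :
    ∑ a ∈ s, f (σ a) = ∑ a ∈ s, f a :=
  sum_nbij' σ σ hs hs (fun a _ => hσ a) (fun a _ => hσ a) fun _ _ => rfl

theorem Finset.sum_div_card_eq_half_of_add_comp_eq {α K : Type*} [Field K] [CharZero K]
    {s : Finset α} {σ : α → α} {f : α → K} {c : K} (hσ : Involutive σ)
    (hs : ∀ a ∈ s, σ a ∈ s) (hne : s.Nonempty) (hpair : ∀ a ∈ s, f a + f (σ a) = c) :
    (∑ a ∈ s, f a) / #s = c / 2 := by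
  have htwice : 2 * ∑ a ∈ s, f a = #s * c := by
    rw [two_mul]
    nth_rw 2 [← sum_comp_involutive hσ hs f]
    rw [← sum_add_distrib, sum_congr rfl hpair, sum_const, nsmul_eq_mul]
  have hcard : (#s : K) ≠ 0 := by exact_mod_cast hne.card_ne_zero
  field_simp
  linear_combination htwice

theorem diffInMeans_add_diffInMeans_not {ι R : Type*} [Fintype ι] [CommRing R] (c : R)
    (y1 y0 : ι → R) (W : ι → Bool) :
    (c * ∑ i, (if W i then y1 i else 0) - c * ∑ i, (if W i then 0 else y0 i))
      + (c * ∑ i, (if !W i then y1 i else 0) - c * ∑ i, (if !W i then 0 else y0 i))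
      = c * ∑ i, (y1 i - y0 i) := by
  rw [← mul_sub, ← mul_sub, ← mul_add, ← sum_sub_distrib, ← sum_sub_distrib, ← sum_add_distrib]
  congr 1
  refine sum_congr rfl fun i _ => ?_
  cases W i <;> simp <;> ring

theorem stmt1_general (n : ℕ) (y1 y0 : Fin n → ℝ)
    (A : Finset (Fin n → Bool)) (hA : A.Nonempty)
    (hsym : ∀ W ∈ A, (fun i => !(W i)) ∈ A) :
    (∑ W ∈ A, ((2 / (n : ℝ)) * ∑ i, (if W i then y1 i else 0)
        - (2 / (n : ℝ)) * ∑ i, (if W i then 0 else y0 i))) / A.card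
      = (∑ i, (y1 i - y0 i)) / n := by
  have hnot : Involutive fun (W : Fin n → Bool) i => !(W i) := fun W => by simp
  rw [sum_div_card_eq_half_of_add_comp_eq hnot hsym hA
    fun W _ => diffInMeans_add_diffInMeans_not _ y1 y0 W]
  ring

/-- Under rerandomization with a symmetric acceptance criterion and equal group sizes,
the difference-in-means estimator is unbiased: `E(τ̂ | φ = 1) = τ`. -/
theorem stmt1 (n : ℕ) (hn : Even n) (hpos : 0 < n) (y1 y0 : Fin n → ℝ)
    (A : Finset (Fin n → Bool)) (hA : A.Nonempty)
    (hsize : ∀ W ∈ A, (univ.filter fun i => W i = true).card = n / 2)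
    (hsym : ∀ W ∈ A, (fun i => !(W i)) ∈ A) :
    (∑ W ∈ A, ((2 / (n : ℝ)) * ∑ i, (if W i then y1 i else 0)
        - (2 / (n : ℝ)) * ∑ i, (if W i then 0 else y0 i))) / A.card
      = (∑ i, (y1 i - y0 i)) / n :=
  stmt1_general n y1 y0 A hA hsym
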